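/- arXiv:math/0310439 — 2 statements merged into one kernel-verified Lean document; each statement's English description precedes it below -/
import Mathlib

section
/- At every point z of S³, the differential of the Hopf map h : S³ → S² (with respect to the standard smooth manifold structures on the spheres) is surjective onto the tangent space of S² at h(z); that is, h is a submersion. -/
open Metric Module
open scoped Manifold

noncomputable section

/-- `ℂ²` with the Euclidean (L²) norm: a 4-dimensional real inner product space. -/
abbrev SpaceC2 : Type := WithLp 2 (ℂ × ℂ)

/-- `ℂ × ℝ` with the Euclidean (L²) norm: a 3-dimensional real inner product space. -/
abbrev SpaceCR : Type := WithLp 2 (ℂ × ℝ)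

instance : Fact (finrank ℝ SpaceC2 = 3 + 1) :=
  ⟨by
    rw [(WithLp.linearEquiv 2 ℝ (ℂ × ℂ)).finrank_eq, Module.finrank_prod,
      Complex.finrank_real_complex]⟩

instance : Fact (finrank ℝ SpaceCR = 2 + 1) :=
  ⟨by
    rw [(WithLp.linearEquiv 2 ℝ (ℂ × ℝ)).finrank_eq, Module.finrank_prod,
      Complex.finrank_real_complex, Module.finrank_self]⟩

/-- The Hopf map `(z₁, z₂) ↦ (2 z₁ conj z₂, |z₁|² - |z₂|²)` from `ℂ²` to `ℂ × ℝ`. -/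
def hopf (z : SpaceC2) : SpaceCR :=
  (WithLp.equiv 2 (ℂ × ℝ)).symm
    (2 * z.fst * (starRingEnd ℂ) z.snd, ‖z.fst‖ ^ 2 - ‖z.snd‖ ^ 2)

theorem hopf_mem_sphere (z : SpaceC2) (hz : z ∈ sphere (0 : SpaceC2) 1) :
    hopf z ∈ sphere (0 : SpaceCR) 1 := by
  rw [mem_sphere_zero_iff_norm] at hz ⊢
  have hz2 : ‖z.fst‖ ^ 2 + ‖z.snd‖ ^ 2 = 1 := by
    have := WithLp.prod_norm_sq_eq_of_L2 z
    rw [hz] at this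
    simpa using this.symm
  have h2 : ‖hopf z‖ ^ 2 = ‖2 * z.fst * (starRingEnd ℂ) z.snd‖ ^ 2
      + ‖‖z.fst‖ ^ 2 - ‖z.snd‖ ^ 2‖ ^ 2 :=
    WithLp.prod_norm_sq_eq_of_L2 _
  have ha : ‖2 * z.fst * (starRingEnd ℂ) z.snd‖ = 2 * (‖z.fst‖ * ‖z.snd‖) := by
    simp [norm_mul]; ring
  have hb : ‖‖z.fst‖ ^ 2 - ‖z.snd‖ ^ 2‖ ^ 2
      = (‖z.fst‖ ^ 2 - ‖z.snd‖ ^ 2) ^ 2 := by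
    rw [Real.norm_eq_abs, sq_abs]
  have hsq : ‖hopf z‖ ^ 2 = 1 := by
    rw [h2, ha, hb]
    linear_combination (‖z.fst‖ ^ 2 + ‖z.snd‖ ^ 2 + 1) * hz2
  have h0 : 0 ≤ ‖hopf z‖ := norm_nonneg _
  nlinarith [hsq, h0]

/-- The Hopf map, as a map from the unit sphere `S³ ⊂ ℂ²` to the unit sphere
`S² ⊂ ℂ × ℝ`. -/
def hopfSphere (z : sphere (0 : SpaceC2) 1) : sphere (0 : SpaceCR) 1 :=
  ⟨hopf z, hopf_mem_sphere z z.2⟩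

/-! Since the tangent space of a sphere at `x` is `(ℝ ∙ x)ᗮ`, it suffices that `dh_z` maps
`(ℝ ∙ z)ᗮ` onto `(ℝ ∙ h z)ᗮ`. For `‖z‖ = 1` the map `(dh_z)* / 4` is a right inverse of `dh_z`,
and it maps `(ℝ ∙ h z)ᗮ` into `(ℝ ∙ z)ᗮ` because `⟪z, (dh_z)* u⟫ = ⟪dh_z z, u⟫ = 2 ⟪h z, u⟫`,
`h` being quadratic. -/

open Function
open scoped ComplexConjugate RealInnerProductSpace

section SphereMaps

variable {E F : Type*} [NormedAddCommGroup E] [InnerProductSpace ℝ E]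
  [NormedAddCommGroup F] [InnerProductSpace ℝ F] {m n : ℕ}
  [Fact (finrank ℝ E = m + 1)] [Fact (finrank ℝ F = n + 1)]
  {f : E → F} {g : sphere (0 : E) 1 → sphere (0 : F) 1}

theorem contMDiff_sphere_of_coe_eq (hf : ContDiff ℝ 1 f) (hg : ∀ x, (g x : F) = f x) :
    ContMDiff (𝓡 m) (𝓡 n) 1 g := by
  have hfg : ∀ x : sphere (0 : E) 1, f x ∈ sphere (0 : F) 1 := fun x ↦ hg x ▸ (g x).2
  have hg' : g = Set.codRestrict (f ∘ (↑)) _ hfg := funext fun x ↦ Subtype.ext (hg x)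
  rw [hg']
  exact (hf.contMDiff.comp contMDiff_coe_sphere).codRestrict_sphere _

theorem mfderiv_coe_comp_mfderiv_sphere_of_coe_eq (hf : ContDiff ℝ 1 f)
    (hg : ∀ x, (g x : F) = f x) (x : sphere (0 : E) 1) :
    (mfderiv (𝓡 n) 𝓘(ℝ, F) ((↑) : sphere (0 : F) 1 → F) (g x)).comp
        (mfderiv (𝓡 m) (𝓡 n) g x) =
      (fderiv ℝ f x).comp (mfderiv (𝓡 m) 𝓘(ℝ, E) ((↑) : sphere (0 : E) 1 → E) x) := by
  rw [← mfderiv_comp x ((contMDiff_coe_sphere (m := 1) _).mdifferentiableAt one_ne_zero)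
      ((contMDiff_sphere_of_coe_eq hf hg x).mdifferentiableAt one_ne_zero),
    show ((↑) ∘ g : sphere (0 : E) 1 → F) = f ∘ (↑) from funext hg,
    mfderiv_comp x (hf.differentiable one_ne_zero _).mdifferentiableAt
      ((contMDiff_coe_sphere (m := 1) x).mdifferentiableAt one_ne_zero), mfderiv_eq_fderiv]
  rfl

theorem surjective_mfderiv_sphere_of_coe_eq (hf : ContDiff ℝ 1 f) (hg : ∀ x, (g x : F) = f x)
    (x : sphere (0 : E) 1)
    (hfx : ∀ u ∈ (ℝ ∙ f x)ᗮ, ∃ w ∈ (ℝ ∙ (x : E))ᗮ, fderiv ℝ f x w = u) :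
    Surjective (mfderiv (𝓡 m) (𝓡 n) g x) := by
  intro u'
  have hu : mvfderiv (𝓡 n) ((↑) : sphere (0 : F) 1 → F) (g x) u' ∈ (ℝ ∙ f x)ᗮ := by
    rw [← hg, ← range_mvfderiv_subtypeVal (n := n)]
    exact ⟨u', rfl⟩
  obtain ⟨w, hw, hwu⟩ := hfx _ hu
  rw [← range_mvfderiv_subtypeVal (n := m)] at hw
  obtain ⟨v, rfl⟩ := hw
  refine ⟨v, injective_mvfderiv_subtypeVal_sphere (g x) ?_⟩
  rw [← hwu]
  exact congr($(mfderiv_coe_comp_mfderiv_sphere_of_coe_eq hf hg x) v)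

end SphereMaps

theorem contDiff_hopf {n : WithTop ℕ∞} : ContDiff ℝ n hopf := by
  have h₁ := (WithLp.fstL 2 ℝ ℂ ℂ).contDiff (n := n)
  have h₂ := (WithLp.sndL 2 ℝ ℂ ℂ).contDiff (n := n)
  exact (WithLp.prodContinuousLinearEquiv 2 ℝ ℂ ℝ).symm.contDiff.comp
    (((contDiff_const.mul h₁).mul (Complex.conjCLE.contDiff.comp h₂)).prodMk
      ((h₁.norm_sq ℝ).sub (h₂.norm_sq ℝ)))

theorem fderiv_hopf_apply (z v : SpaceC2) :
    fderiv ℝ hopf z v = WithLp.toLp 2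
      (2 * v.fst * conj z.snd + 2 * z.fst * conj v.snd,
        2 * ⟪z.fst, v.fst⟫ - 2 * ⟪z.snd, v.snd⟫) := by
  have h₁ := (WithLp.fstL 2 ℝ ℂ ℂ).hasFDerivAt (x := z)
  have h₂ := (WithLp.sndL 2 ℝ ℂ ℂ).hasFDerivAt (x := z)
  have h : HasFDerivAt hopf _ z :=
    (WithLp.prodContinuousLinearEquiv 2 ℝ ℂ ℝ).symm.hasFDerivAt.comp z
      (((h₁.const_mul 2).mul (Complex.conjCLE.hasFDerivAt.comp z h₂)).prodMk
        (h₁.norm_sq.sub h₂.norm_sq))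
  rw [h.fderiv]
  simp only [WithLp.fstL_apply, ContinuousAlgEquiv.coe_coeCLE, comp_apply, WithLp.sndL_apply,
    Complex.conjCAE_apply, ContinuousLinearMap.comp_apply, ContinuousLinearMap.prod_apply,
    add_apply, smul_apply, ContinuousLinearEquiv.coe_coe,
    ContinuousAlgEquiv.coeCLE_apply, smul_eq_mul, sub_apply, coe_innerSL_apply,
    nsmul_eq_mul, Nat.cast_ofNat, WithLp.prodContinuousLinearEquiv_symm_apply, WithLp.toLp.injEq,
    Prod.mk.injEq, and_true]
  ring

def hopfLift (z : SpaceC2) (u : SpaceCR) : SpaceC2 :=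
  WithLp.toLp 2 ((u.snd * z.fst + u.fst * z.snd) / 2, (conj u.fst * z.fst - u.snd * z.snd) / 2)

theorem fderiv_hopf_hopfLift (z : SpaceC2) (u : SpaceCR) :
    fderiv ℝ hopf z (hopfLift z u) = ‖z‖ ^ 2 • u := by
  rw [fderiv_hopf_apply, WithLp.prod_norm_sq_eq_of_L2]
  refine (WithLp.ext_iff 2).2 (Prod.ext (Complex.ext ?_ ?_) ?_) <;>
  · simp only [hopfLift, WithLp.toLp_fst, WithLp.toLp_snd, WithLp.ofLp_fst, WithLp.ofLp_snd,
      WithLp.ofLp_smul, Prod.smul_fst, Prod.smul_snd, smul_eq_mul, Complex.real_smul, map_div₀,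
      map_sub, map_mul, Complex.conj_conj, Complex.conj_ofReal, map_ofNat, Complex.inner,
      Complex.sq_norm, Complex.normSq_apply, Complex.add_re, Complex.add_im, Complex.sub_re,
      Complex.sub_im, Complex.mul_re, Complex.mul_im, Complex.div_ofNat_re, Complex.div_ofNat_im,
      Complex.conj_re, Complex.conj_im, Complex.ofReal_re, Complex.ofReal_im, Complex.ofReal_add,
      Complex.ofReal_mul, Complex.re_ofNat, Complex.im_ofNat]
    ring

theorem inner_hopfLift (z : SpaceC2) (u : SpaceCR) :
    ⟪z, hopfLift z u⟫ = ⟪hopf z, u⟫ / 2 := by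
  simp only [hopfLift, hopf, WithLp.equiv_symm_apply, WithLp.prod_inner_apply, WithLp.ofLp_fst,
    WithLp.ofLp_snd, map_mul, map_ofNat, Complex.conj_conj,
    Complex.inner, RCLike.inner_apply, Real.ringHom_apply, Complex.sq_norm, Complex.normSq_apply,
    Complex.add_re, Complex.add_im, Complex.sub_re, Complex.sub_im, Complex.mul_re, Complex.mul_im,
    Complex.div_ofNat_re, Complex.div_ofNat_im, Complex.conj_re, Complex.conj_im,
    Complex.ofReal_re, Complex.ofReal_im, Complex.re_ofNat, Complex.im_ofNat]
  ring

/-- At every point of `S³`, the differential of the Hopf map `h : S³ → S²` is surjective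
onto the tangent space of `S²` at the image point; that is, `h` is a submersion. -/
theorem hopfSphere_isSubmersion :
    ∀ z : sphere (0 : SpaceC2) 1,
      Function.Surjective (mfderiv (𝓡 3) (𝓡 2) hopfSphere z) := by
  intro z
  refine surjective_mfderiv_sphere_of_coe_eq contDiff_hopf (fun _ ↦ rfl) z
    fun u hu ↦ ⟨hopfLift z u, ?_, ?_⟩
  · rw [Submodule.mem_orthogonal_singleton_iff_inner_right, inner_hopfLift,
      Submodule.mem_orthogonal_singleton_iff_inner_right.1 hu, zero_div]
  · rw [fderiv_hopf_hopfLift, norm_eq_of_mem_sphere z, one_pow, one_smul]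
end
end

section
/- Two points (z₁, z₂) and (w₁, w₂) of S³ have the same image under the Hopf map if and only if there exists λ ∈ ℂ with |λ| = 1 such that (w₁, w₂) = (λ·z₁, λ·z₂). In other words, the fibers of the Hopf map are exactly the orbits of the circle action λ·(z₁, z₂) = (λ·z₁, λ·z₂) on S³. -/
/-! For `z₁ ≠ 0` the only candidate is `λ = w₁ / z₁`, a unit because `|z₁| = |w₁|` on the fibre
(the second Hopf coordinate and `|z₁|² + |z₂|² = 1` determine `|z₁|` and `|z₂|`); multiplying the
conjugate of the first Hopf coordinate by `w₁` and cancelling `conj z₁` then gives `w₂ = λ z₂`.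
The case `z₂ ≠ 0` is symmetric. -/

open ComplexConjugate

noncomputable def hopfMap (z : ℂ × ℂ) : ℂ × ℝ :=
  (2 * z.1 * conj z.2, ‖z.1‖ ^ 2 - ‖z.2‖ ^ 2)

theorem hopfMap_unit_mul {lam : ℂ} (hlam : ‖lam‖ = 1) (z₁ z₂ : ℂ) :
    hopfMap (lam * z₁, lam * z₂) = hopfMap (z₁, z₂) := by
  have hunit : lam * conj lam = 1 := by rw [Complex.mul_conj', hlam]; norm_num
  simp only [hopfMap, map_mul, norm_mul, hlam, one_mul, Prod.mk.injEq, and_true]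
  linear_combination 2 * z₁ * conj z₂ * hunit

theorem mul_eq_mul_of_mul_conj_eq {z₁ z₂ w₁ w₂ : ℂ} (hz₁ : z₁ ≠ 0) (h₁ : ‖z₁‖ = ‖w₁‖)
    (h : z₁ * conj z₂ = w₁ * conj w₂) : w₂ * z₁ = w₁ * z₂ := by
  have hconj : conj z₁ * z₂ = conj w₁ * w₂ := by
    simpa [mul_comm] using congrArg conj h
  have key : (w₂ * z₁) * conj z₁ = (w₁ * z₂) * conj z₁ :=
    calc (w₂ * z₁) * conj z₁ = w₂ * (w₁ * conj w₁) := by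
          rw [mul_assoc, Complex.mul_conj', Complex.mul_conj', h₁]
      _ = (w₁ * z₂) * conj z₁ := by linear_combination -w₁ * hconj
  exact mul_right_cancel₀ ((map_ne_zero conj).mpr hz₁) key

theorem exists_unit_mul_of_mul_conj_eq {z₁ z₂ w₁ w₂ : ℂ} (hz₁ : z₁ ≠ 0) (h₁ : ‖z₁‖ = ‖w₁‖)
    (h : z₁ * conj z₂ = w₁ * conj w₂) :
    ∃ lam : ℂ, ‖lam‖ = 1 ∧ w₁ = lam * z₁ ∧ w₂ = lam * z₂ := by
  refine ⟨w₁ / z₁, ?_, by field_simp, ?_⟩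
  · rw [norm_div, ← h₁, div_self (norm_ne_zero_iff.mpr hz₁)]
  · rw [div_mul_eq_mul_div, ← mul_eq_mul_of_mul_conj_eq hz₁ h₁ h]
    field_simp

theorem exists_unit_mul_of_norm_eq_of_mul_conj_eq {z₁ z₂ w₁ w₂ : ℂ} (h₁ : ‖z₁‖ = ‖w₁‖)
    (h₂ : ‖z₂‖ = ‖w₂‖) (h : z₁ * conj z₂ = w₁ * conj w₂) :
    ∃ lam : ℂ, ‖lam‖ = 1 ∧ w₁ = lam * z₁ ∧ w₂ = lam * z₂ := by
  by_cases hz₁ : z₁ = 0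
  · have hw₁ : w₁ = 0 := norm_eq_zero.mp (h₁ ▸ hz₁ ▸ norm_zero)
    by_cases hz₂ : z₂ = 0
    · have hw₂ : w₂ = 0 := norm_eq_zero.mp (h₂ ▸ hz₂ ▸ norm_zero)
      exact ⟨1, norm_one, by simp [hz₁, hw₁], by simp [hz₂, hw₂]⟩
    · have h' : z₂ * conj z₁ = w₂ * conj w₁ := by simp [hz₁, hw₁]
      obtain ⟨lam, hlam, hw₂, -⟩ := exists_unit_mul_of_mul_conj_eq hz₂ h₂ h'
      exact ⟨lam, hlam, by simp [hz₁, hw₁], hw₂⟩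
  · exact exists_unit_mul_of_mul_conj_eq hz₁ h₁ h

/-- Two points of `S³` have the same image under the Hopf map if and only if they lie in the
same orbit of the circle action `λ · (z₁, z₂) = (λ z₁, λ z₂)`. -/
theorem hopf_fibers_are_circle_orbits (z₁ z₂ w₁ w₂ : ℂ)
    (hz : ‖z₁‖ ^ 2 + ‖z₂‖ ^ 2 = 1)
    (hw : ‖w₁‖ ^ 2 + ‖w₂‖ ^ 2 = 1) :
    (2 * z₁ * (starRingEnd ℂ) z₂, ‖z₁‖ ^ 2 - ‖z₂‖ ^ 2)
        = (2 * w₁ * (starRingEnd ℂ) w₂, ‖w₁‖ ^ 2 - ‖w₂‖ ^ 2)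
      ↔ ∃ lam : ℂ, ‖lam‖ = 1 ∧ w₁ = lam * z₁ ∧ w₂ = lam * z₂ := by
  change hopfMap (z₁, z₂) = hopfMap (w₁, w₂) ↔ _
  constructor
  · intro h
    obtain ⟨hcross, hheight⟩ := Prod.mk.inj h
    have h₁ : ‖z₁‖ = ‖w₁‖ := (sq_eq_sq₀ (norm_nonneg _) (norm_nonneg _)).mp (by linarith)
    have h₂ : ‖z₂‖ = ‖w₂‖ := (sq_eq_sq₀ (norm_nonneg _) (norm_nonneg _)).mp (by linarith)
    exact exists_unit_mul_of_norm_eq_of_mul_conj_eq h₁ h₂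
      (mul_left_cancel₀ two_ne_zero (by simpa only [mul_assoc] using hcross))
  · rintro ⟨lam, hlam, rfl, rfl⟩
    exact (hopfMap_unit_mul hlam z₁ z₂).symm
end
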